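/- arXiv:1512.05539 — 4 statements merged into one kernel-verified Lean document; each statement's English description precedes it below -/
import Mathlib

section
/- Let ρ be a density matrix on the N-partite Hilbert space, i.e. a positive semidefinite matrix indexed by (Fin N → Fin d) with trace 1. If ρ is fully separable, then for every subsystem j : Fin N the purity of the whole dominates the purity of the one-qudit reduced matrix: tr ρ² ≤ tr (ρ_j)². -/
open scoped ComplexOrder

noncomputable section

/-- Extend an assignment `g` on the indices other than `j` by the value `x` at position `j`. -/
def insertAt {N d : ℕ} (j : Fin N) (x : Fin d) (g : {i : Fin N // i ≠ j} → Fin d) :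
    Fin N → Fin d :=
  fun i => if h : i = j then x else g ⟨i, h⟩

/-- The one-qudit reduced density matrix at site `j`. -/
def reduced {N d : ℕ} (ρ : Matrix (Fin N → Fin d) (Fin N → Fin d) ℂ) (j : Fin N) :
    Matrix (Fin d) (Fin d) ℂ :=
  Matrix.of fun x y => ∑ g : {i : Fin N // i ≠ j} → Fin d,
    ρ (insertAt j x g) (insertAt j y g)

/-- Full separability of an `N`-partite `d`-level state. -/
def FullySeparable {N d : ℕ} (ρ : Matrix (Fin N → Fin d) (Fin N → Fin d) ℂ) : Prop :=
  ∃ (m : ℕ) (p : Fin m → ℝ) (σ : Fin m → Fin N → Matrix (Fin d) (Fin d) ℂ),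
    (∀ i, 0 ≤ p i) ∧ (∑ i, p i = 1) ∧
    (∀ i k, (σ i k).PosSemidef ∧ (σ i k).trace = 1) ∧
    (∀ a b, ρ a b = ∑ i, (p i : ℂ) * ∏ k, σ i k (a k) (b k))

/-!
Write `ρ = ∑ᵢ pᵢ ⊗ₖ σᵢᵏ`. Then `tr ρ² = ∑ᵢᵢ' pᵢ pᵢ' ∏ₖ tr (σᵢᵏ σᵢ'ᵏ)`, while `ρⱼ = ∑ᵢ pᵢ σᵢʲ`, so
`tr ρⱼ² = ∑ᵢᵢ' pᵢ pᵢ' tr (σᵢʲ σᵢ'ʲ)`. For density matrices `σ, τ` one has `0 ≤ tr (σ τ) ≤ 1`,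
so each product over `k` is at most its factor at `k = j`.
-/

namespace Matrix

section TraceMul

open scoped Matrix.Norms.Frobenius

variable {n 𝕜 : Type*} [Fintype n] [RCLike 𝕜] {A B : Matrix n n 𝕜}

theorem trace_conjTranspose_mul_self_eq_frobenius_norm_sq {m : Type*} [Fintype m]
    (M : Matrix m n 𝕜) : (Mᴴ * M).trace = ((‖M‖ ^ 2 : ℝ) : 𝕜) := by
  have hnorm : ‖M‖ ^ 2 = ∑ i, ∑ j, ‖M i j‖ ^ 2 := by
    rw [frobenius_norm_def, ← Real.rpow_natCast, ← Real.rpow_mul (by positivity)]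
    norm_num
  rw [hnorm, trace, Finset.sum_comm]
  push_cast
  simp [mul_apply, RCLike.conj_mul]

open scoped MatrixOrder in
theorem PosSemidef.exists_eq_conjTranspose_mul_self (hA : A.PosSemidef) :
    ∃ C : Matrix n n 𝕜, A = Cᴴ * C := by
  classical
  exact CStarAlgebra.nonneg_iff_eq_star_mul_self.mp hA.nonneg

theorem PosSemidef.trace_mul_nonneg (hA : A.PosSemidef) (hB : B.PosSemidef) :
    0 ≤ (A * B).trace := by
  obtain ⟨C, rfl⟩ := hA.exists_eq_conjTranspose_mul_self
  rw [mul_assoc, trace_mul_comm]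
  exact (hB.mul_mul_conjTranspose_same C).trace_nonneg

/-- With `A = CᴴC` and `B = DᴴD`, `tr (A B) = ‖D Cᴴ‖²` in the Frobenius norm, which is
submultiplicative. -/
theorem PosSemidef.trace_mul_le_trace_mul_trace (hA : A.PosSemidef) (hB : B.PosSemidef) :
    (A * B).trace ≤ A.trace * B.trace := by
  obtain ⟨C, rfl⟩ := hA.exists_eq_conjTranspose_mul_self
  obtain ⟨D, rfl⟩ := hB.exists_eq_conjTranspose_mul_self
  have hcycle : (Cᴴ * C * (Dᴴ * D)).trace = ((D * Cᴴ)ᴴ * (D * Cᴴ)).trace := by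
    rw [mul_assoc, trace_mul_comm]
    simp only [conjTranspose_mul, conjTranspose_conjTranspose, mul_assoc]
  simp only [hcycle, trace_conjTranspose_mul_self_eq_frobenius_norm_sq, ← RCLike.ofReal_mul,
    RCLike.ofReal_le_ofReal]
  calc ‖D * Cᴴ‖ ^ 2 ≤ (‖D‖ * ‖Cᴴ‖) ^ 2 := by gcongr; exact frobenius_norm_mul D Cᴴ
    _ = ‖C‖ ^ 2 * ‖D‖ ^ 2 := by rw [frobenius_norm_conjTranspose]; ring

end TraceMul

section PiKronecker

variable {ι n R : Type*} [Fintype ι] [CommSemiring R]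

def piKronecker (A : ι → Matrix n n R) : Matrix (ι → n) (ι → n) R :=
  of fun a b => ∏ k, A k (a k) (b k)

@[simp]
theorem piKronecker_apply (A : ι → Matrix n n R) (a b : ι → n) :
    piKronecker A a b = ∏ k, A k (a k) (b k) :=
  rfl

theorem piKronecker_mul [DecidableEq ι] [Fintype n] (A B : ι → Matrix n n R) :
    piKronecker A * piKronecker B = piKronecker fun k => A k * B k := by
  ext a b
  simp only [mul_apply, piKronecker_apply, Fintype.prod_sum, Finset.prod_mul_distrib]

theorem trace_piKronecker [DecidableEq ι] [Fintype n] (A : ι → Matrix n n R) :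
    (piKronecker A).trace = ∏ k, (A k).trace := by
  simp only [trace, diag_apply, piKronecker_apply, Fintype.prod_sum]

end PiKronecker

theorem trace_sum_smul_mul_sum_smul {ι n R : Type*} [Fintype ι] [Fintype n] [CommSemiring R]
    (c : ι → R) (M : ι → Matrix n n R) :
    ((∑ i, c i • M i) * ∑ i, c i • M i).trace = ∑ i, ∑ i', c i * c i' * (M i * M i').trace := by
  simp only [Matrix.sum_mul, Matrix.mul_sum, trace_sum, smul_mul_smul_comm, trace_smul, smul_eq_mul]
  exact Finset.sum_comm

end Matrix

theorem Fintype.prod_le_apply_of_le_one {ι R : Type*} [Fintype ι] [CommMonoidWithZero R]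
    [PartialOrder R] [ZeroLEOneClass R] [PosMulMono R] {f : ι → R} (j : ι)
    (h0 : ∀ k, 0 ≤ f k) (h1 : ∀ k, f k ≤ 1) : ∏ k, f k ≤ f j := by
  simpa using Finset.prod_le_prod_of_subset_of_le_one (Finset.subset_univ {j})
    (fun k _ => h0 k) (fun k _ _ => h1 k)

section Reduced

variable {N d : ℕ}

theorem prod_insertAt {R : Type*} [CommMonoid R] (f : Fin N → Fin d → Fin d → R) (j : Fin N)
    (x y : Fin d) (g : {i : Fin N // i ≠ j} → Fin d) :
    ∏ k, f k (insertAt j x g k) (insertAt j y g k) =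
      f j x y * ∏ k : {i // i ≠ j}, f k (g k) (g k) := by
  rw [Fintype.prod_eq_mul_prod_subtype_ne _ j]
  simp only [insertAt, dif_pos, Subtype.coe_eta, ne_eq]
  congr 1
  exact Finset.prod_congr rfl fun k _ => by simp only [dif_neg k.2]

theorem reduced_sum_smul {ι : Type*} [Fintype ι] (c : ι → ℂ)
    (M : ι → Matrix (Fin N → Fin d) (Fin N → Fin d) ℂ) (j : Fin N) :
    reduced (∑ i, c i • M i) j = ∑ i, c i • reduced (M i) j := by
  ext x y
  simp only [reduced, Matrix.of_apply, Matrix.sum_apply, Matrix.smul_apply, smul_eq_mul,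
    Finset.mul_sum]
  exact Finset.sum_comm

theorem reduced_piKronecker (A : Fin N → Matrix (Fin d) (Fin d) ℂ) (j : Fin N) :
    reduced (Matrix.piKronecker A) j = (∏ k : {i // i ≠ j}, (A k).trace) • A j := by
  ext x y
  calc reduced (Matrix.piKronecker A) j x y
      = ∑ g : {i // i ≠ j} → Fin d, A j x y * ∏ k : {i // i ≠ j}, A k (g k) (g k) :=
        Finset.sum_congr rfl fun g _ => prod_insertAt (fun k => A k) j x y g
    _ = _ := by
        simp only [← Finset.mul_sum, Matrix.smul_apply, Matrix.trace, Matrix.diag_apply,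
          Fintype.prod_sum, smul_eq_mul, mul_comm]

end Reduced

theorem purity_le_reduced_purity_of_fullySeparable_general
    (N d : ℕ) (ρ : Matrix (Fin N → Fin d) (Fin N → Fin d) ℂ)
    (hsep : FullySeparable ρ) :
    ∀ j : Fin N, (ρ * ρ).trace ≤ (reduced ρ j * reduced ρ j).trace := by
  intro j
  obtain ⟨m, p, σ, hp, -, hσ, hρ⟩ := hsep
  have hdecomp : ρ = ∑ i, (p i : ℂ) • Matrix.piKronecker (σ i) := by
    ext a b
    simp [hρ, Matrix.sum_apply]
  have hred : reduced ρ j = ∑ i, (p i : ℂ) • σ i j := by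
    have htr (i : Fin m) (k : Fin N) : (σ i k).trace = 1 := (hσ i k).2
    rw [hdecomp, reduced_sum_smul]
    simp only [reduced_piKronecker, htr, Finset.prod_const_one, one_smul]
  have hbounds (i i' : Fin m) (k : Fin N) :
      0 ≤ (σ i k * σ i' k).trace ∧ (σ i k * σ i' k).trace ≤ 1 := by
    obtain ⟨hA, hA1⟩ := hσ i k
    obtain ⟨hB, hB1⟩ := hσ i' k
    exact ⟨hA.trace_mul_nonneg hB,
      by simpa [hA1, hB1] using hA.trace_mul_le_trace_mul_trace hB⟩
  rw [hred, hdecomp, Matrix.trace_sum_smul_mul_sum_smul, Matrix.trace_sum_smul_mul_sum_smul]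
  simp only [Matrix.piKronecker_mul, Matrix.trace_piKronecker]
  gcongr with i _ i' _
  · exact mul_nonneg (Complex.zero_le_real.2 (hp i)) (Complex.zero_le_real.2 (hp i'))
  · exact Fintype.prod_le_apply_of_le_one j (fun k => (hbounds i i' k).1)
      (fun k => (hbounds i i' k).2)

/-- If `ρ` is a fully separable density matrix, then for every subsystem `j` the purity of
the whole is dominated by the purity of the one-qudit reduced density matrix. -/
theorem purity_le_reduced_purity_of_fullySeparable
    (N d : ℕ) (ρ : Matrix (Fin N → Fin d) (Fin N → Fin d) ℂ)
    (hpsd : ρ.PosSemidef) (htr : ρ.trace = 1) (hsep : FullySeparable ρ) :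
    ∀ j : Fin N, (ρ * ρ).trace ≤ (reduced ρ j * reduced ρ j).trace :=
  purity_le_reduced_purity_of_fullySeparable_general N d ρ hsep
end
end

section
/- (Theorem 3) Let Φ_1, …, Φ_M be unit vectors indexed by (Fin N → Fin d), N ≥ 3, such that for every k and every subsystem j : Fin N, the (N−1)-partite state obtained from |Φ_k⟩⟨Φ_k| by tracing out subsystem j is fully separable. Let λ_1, …, λ_M > 0 with ∑_k λ_k = 1 and set ρ = ∑_k λ_k |Φ_k⟩⟨Φ_k|. If tr (ρ_j)² < tr ρ² for every subsystem j : Fin N, then ρ is genuinely multipartite entangled: for every subset S of Fin N with S nonempty and S ≠ Fin N, ρ is not separable across the bipartition (S, Sᶜ). -/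
open scoped ComplexOrder

noncomputable section

/-- Tracing out subsystem `j`, leaving a state on the remaining `N - 1` subsystems. -/
def traceOut {N d : ℕ} (ρ : Matrix (Fin N → Fin d) (Fin N → Fin d) ℂ) (j : Fin N) :
    Matrix ({i : Fin N // i ≠ j} → Fin d) ({i : Fin N // i ≠ j} → Fin d) ℂ :=
  Matrix.of fun a b => ∑ x : Fin d, ρ (insertAt j x a) (insertAt j x b)

/-- The pure-state density matrix `|Φ⟩⟨Φ|`. -/
def pureMat {α : Type*} (Φ : α → ℂ) : Matrix α α ℂ :=
  Matrix.of fun a b => Φ a * (starRingEnd ℂ) (Φ b)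

/-- Full separability of a multipartite `d`-level state with subsystems indexed by `ι`. -/
def FullySeparableOn (ι : Type*) [Fintype ι] (d : ℕ)
    (ρ : Matrix (ι → Fin d) (ι → Fin d) ℂ) : Prop :=
  ∃ (m : ℕ) (p : Fin m → ℝ) (σ : Fin m → ι → Matrix (Fin d) (Fin d) ℂ),
    (∀ i, 0 ≤ p i) ∧ (∑ i, p i = 1) ∧
    (∀ i k, (σ i k).PosSemidef ∧ (σ i k).trace = 1) ∧
    (∀ a b, ρ a b = ∑ i, (p i : ℂ) * ∏ k, σ i k (a k) (b k))

/-- Separability of an `N`-partite state across the bipartition `(S, Sᶜ)`. -/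
def SepAcross {N d : ℕ} (S : Finset (Fin N))
    (ρ : Matrix (Fin N → Fin d) (Fin N → Fin d) ℂ) : Prop :=
  ∃ (m : ℕ) (p : Fin m → ℝ)
    (A : Fin m → Matrix ({i : Fin N // i ∈ S} → Fin d) ({i : Fin N // i ∈ S} → Fin d) ℂ)
    (B : Fin m → Matrix ({i : Fin N // i ∉ S} → Fin d) ({i : Fin N // i ∉ S} → Fin d) ℂ),
    (∀ i, 0 ≤ p i) ∧ (∑ i, p i = 1) ∧
    (∀ i, (A i).PosSemidef ∧ (A i).trace = 1) ∧
    (∀ i, (B i).PosSemidef ∧ (B i).trace = 1) ∧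
    (∀ a b : Fin N → Fin d,
      ρ a b = ∑ i, (p i : ℂ)
        * A i (fun k => a k.1) (fun k => b k.1)
        * B i (fun k => a k.1) (fun k => b k.1))

/-!
Suppose `ρ = ∑ᵢ pᵢ Aᵢ ⊗ Bᵢ` across `(S, Sᶜ)`. Expanding `tr ρ²` and using
`0 ≤ tr (Aᵢ Aᵢ')` and `tr (Bᵢ Bᵢ') ≤ 1` gives `tr ρ² ≤ tr ρ_S²` for the marginal `ρ_S` on `S`.
Now pick `j ∈ S` and `j₀ ∉ S`. Tracing out `j₀` turns `ρ` into a convex combination of fully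
separable states, so `ρ_S`, a marginal of it, is fully separable as well. For a fully separable
state `∑ᵤ qᵤ ⨂ₗ σᵤₗ` the purity can only grow under taking marginals, because
`tr ((⨂ₗ σᵤₗ) (⨂ₗ σᵤ'ₗ)) = ∏ₗ tr (σᵤₗ σᵤ'ₗ)` is a product of factors in `[0, 1]`.
Hence `tr ρ² ≤ tr ρ_S² ≤ tr ρ_j²`, contradicting the hypothesis at `j`.
-/

open scoped Kronecker

namespace Equiv

variable {α : Type*} {β : α → Type*} (p : α → Prop) [DecidablePred p]

@[simp]
lemma piEquivPiSubtypeProd_symm_apply_val_left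
    (f : (∀ i : {x // p x}, β i) × ∀ i : {x // ¬p x}, β i) (x : {x // p x}) :
    (piEquivPiSubtypeProd p β).symm f x = f.1 x :=
  dif_pos x.2

@[simp]
lemma piEquivPiSubtypeProd_symm_apply_val_right
    (f : (∀ i : {x // p x}, β i) × ∀ i : {x // ¬p x}, β i) (x : {x // ¬p x}) :
    (piEquivPiSubtypeProd p β).symm f x = f.2 x :=
  dif_neg x.2

end Equiv

namespace Matrix

variable {m n : Type*} [Fintype n]

section Frobenius

attribute [local instance] frobeniusNormedAddCommGroup

lemma trace_conjTranspose_mul_self_eq_frobenius_sq [Fintype m] (A : Matrix m n ℂ) :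
    (Aᴴ * A).trace = ((‖A‖ ^ 2 : ℝ) : ℂ) := by
  rw [frobenius_norm_def, ← Real.sqrt_eq_rpow, Real.sq_sqrt (by positivity)]
  simp only [trace, diag, mul_apply, conjTranspose_apply, Complex.ofReal_sum]
  rw [Finset.sum_comm]
  refine Finset.sum_congr rfl fun i _ => Finset.sum_congr rfl fun j _ => ?_
  rw [Complex.star_def, ← Complex.normSq_eq_conj_mul_self, ← Complex.sq_norm]
  norm_cast

/-- Both trace inequalities for positive semidefinite matrices below reduce, through this
identity, to submultiplicativity of the Frobenius norm. -/
lemma trace_conjTranspose_mul_self_mul_conjTranspose_mul_self (P Q : Matrix n n ℂ) :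
    (Pᴴ * P * (Qᴴ * Q)).trace = ((‖Q * Pᴴ‖ ^ 2 : ℝ) : ℂ) := by
  rw [← trace_conjTranspose_mul_self_eq_frobenius_sq, Matrix.mul_assoc, trace_mul_comm]
  simp only [conjTranspose_mul, conjTranspose_conjTranspose, Matrix.mul_assoc]

lemma PosSemidef.exists_eq_conjTranspose_mul_self_s12 {X : Matrix n n ℂ} (hX : X.PosSemidef) :
    ∃ P : Matrix n n ℂ, X = Pᴴ * P := by
  classical
  open scoped MatrixOrder in
  exact CStarAlgebra.nonneg_iff_eq_star_mul_self.mp hX.nonneg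

lemma PosSemidef.trace_mul_nonneg_s12 {X Y : Matrix n n ℂ} (hX : X.PosSemidef) (hY : Y.PosSemidef) :
    0 ≤ (X * Y).trace := by
  obtain ⟨P, rfl⟩ := hX.exists_eq_conjTranspose_mul_self_s12
  obtain ⟨Q, rfl⟩ := hY.exists_eq_conjTranspose_mul_self_s12
  rw [trace_conjTranspose_mul_self_mul_conjTranspose_mul_self]
  exact Complex.zero_le_real.mpr (sq_nonneg _)

lemma PosSemidef.trace_mul_le {X Y : Matrix n n ℂ} (hX : X.PosSemidef) (hY : Y.PosSemidef) :
    (X * Y).trace ≤ X.trace * Y.trace := by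
  obtain ⟨P, rfl⟩ := hX.exists_eq_conjTranspose_mul_self_s12
  obtain ⟨Q, rfl⟩ := hY.exists_eq_conjTranspose_mul_self_s12
  rw [trace_conjTranspose_mul_self_mul_conjTranspose_mul_self,
    trace_conjTranspose_mul_self_eq_frobenius_sq, trace_conjTranspose_mul_self_eq_frobenius_sq,
    ← Complex.ofReal_mul, Complex.real_le_real, ← frobenius_norm_conjTranspose P, ← mul_pow,
    mul_comm]
  exact pow_le_pow_left₀ (norm_nonneg _) (frobenius_norm_mul Q Pᴴ) 2

end Frobenius

lemma PosSemidef.trace_mul_le_one {X Y : Matrix n n ℂ} (hX : X.PosSemidef) (hY : Y.PosSemidef)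
    (hXtr : X.trace = 1) (hYtr : Y.trace = 1) : (X * Y).trace ≤ 1 := by
  simpa [hXtr, hYtr] using hX.trace_mul_le hY

def partialTraceRight {R : Type*} [AddCommMonoid R] (M : Matrix (m × n) (m × n) R) :
    Matrix m m R :=
  of fun a b => ∑ c, M (a, c) (b, c)

lemma partialTraceRight_sum_smul_kronecker {ι R S : Type*} [Fintype ι] [CommSemiring R]
    [Monoid S] [DistribMulAction S R] (p : ι → S) (A : ι → Matrix m m R)
    (B : ι → Matrix n n R) (hB : ∀ i, (B i).trace = 1) :
    partialTraceRight (∑ i, p i • A i ⊗ₖ B i) = ∑ i, p i • A i := by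
  ext a b
  simp only [partialTraceRight, of_apply, sum_apply, smul_apply, kronecker_apply]
  rw [Finset.sum_comm]
  refine Finset.sum_congr rfl fun i _ => ?_
  rw [← Finset.smul_sum, ← Finset.mul_sum]
  simpa [trace] using congrArg (p i • (A i a b * ·)) (hB i)

def tensorPi {κ R : Type*} [Fintype κ] [CommMonoid R] (σ : κ → Matrix n n R) :
    Matrix (κ → n) (κ → n) R :=
  of fun a b => ∏ l, σ l (a l) (b l)

lemma trace_tensorPi_mul_tensorPi {κ R : Type*} [Fintype κ] [DecidableEq κ] [CommSemiring R]
    (σ τ : κ → Matrix n n R) :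
    (tensorPi σ * tensorPi τ).trace = ∏ l, (σ l * τ l).trace := by
  simp only [trace, diag, mul_apply, tensorPi, of_apply, ← Finset.prod_mul_distrib,
    Fintype.prod_sum]

end Matrix

open Matrix

section Purity

variable {m n ι : Type*} [Fintype m] [Fintype n] [Fintype ι]

def purity (ρ : Matrix n n ℂ) : ℂ :=
  (ρ * ρ).trace

lemma purity_submatrix_equiv (e : m ≃ n) (ρ : Matrix n n ℂ) :
    purity (ρ.submatrix e e) = purity ρ := by
  rw [purity, submatrix_mul_equiv]
  exact e.sum_comp fun i => (ρ * ρ) i i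

lemma purity_sum_smul (p : ι → ℝ) (X : ι → Matrix n n ℂ) :
    purity (∑ i, p i • X i) = ∑ i, ∑ i', ((p i * p i' : ℝ) : ℂ) * (X i * X i').trace := by
  rw [purity, Matrix.sum_mul]
  simp only [Matrix.mul_sum, trace_sum, smul_mul_smul_comm, trace_smul, Complex.real_smul,
    Complex.ofReal_mul]

lemma purity_sum_smul_le {p : ι → ℝ} (hp : ∀ i, 0 ≤ p i) (X : ι → Matrix m m ℂ)
    (Y : ι → Matrix n n ℂ) (hXY : ∀ i i', (X i * X i').trace ≤ (Y i * Y i').trace) :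
    purity (∑ i, p i • X i) ≤ purity (∑ i, p i • Y i) := by
  rw [purity_sum_smul, purity_sum_smul]
  refine Finset.sum_le_sum fun i _ => Finset.sum_le_sum fun i' _ => ?_
  exact mul_le_mul_of_nonneg_left (hXY i i')
    (Complex.zero_le_real.mpr (mul_nonneg (hp i) (hp i')))

lemma purity_sum_smul_kronecker_le {p : ι → ℝ} (hp : ∀ i, 0 ≤ p i)
    {A : ι → Matrix m m ℂ} {B : ι → Matrix n n ℂ} (hA : ∀ i, (A i).PosSemidef)
    (hB : ∀ i, (B i).PosSemidef) (hBtr : ∀ i, (B i).trace = 1) :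
    purity (∑ i, p i • A i ⊗ₖ B i) ≤ purity (∑ i, p i • A i) := by
  refine purity_sum_smul_le hp _ _ fun i i' => ?_
  rw [← mul_kronecker_mul, trace_kronecker]
  simpa using mul_le_mul_of_nonneg_left ((hB i).trace_mul_le_one (hB i') (hBtr i) (hBtr i'))
    ((hA i).trace_mul_nonneg_s12 (hA i'))

end Purity

section Marginal

variable {κ n R : Type*} [Fintype κ] [DecidableEq κ] [Fintype n] [AddCommMonoid R]

def marginal (P : κ → Prop) [DecidablePred P] (ρ : Matrix (κ → n) (κ → n) R) :
    Matrix ({i // P i} → n) ({i // P i} → n) R :=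
  partialTraceRight
    (reindex (Equiv.piEquivPiSubtypeProd P fun _ => n) (Equiv.piEquivPiSubtypeProd P fun _ => n) ρ)

lemma marginal_apply (P : κ → Prop) [DecidablePred P] (ρ : Matrix (κ → n) (κ → n) R)
    (a b : {i // P i} → n) :
    marginal P ρ a b = ∑ c, ρ ((Equiv.piEquivPiSubtypeProd P fun _ => n).symm (a, c))
      ((Equiv.piEquivPiSubtypeProd P fun _ => n).symm (b, c)) :=
  rfl

lemma marginal_sum_smul {ι S : Type*} [Fintype ι] [Monoid S] [DistribMulAction S R]
    (P : κ → Prop) [DecidablePred P] (p : ι → S) (X : ι → Matrix (κ → n) (κ → n) R) :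
    marginal P (∑ i, p i • X i) = ∑ i, p i • marginal P (X i) := by
  ext a b
  simp only [marginal_apply, Matrix.sum_apply, Matrix.smul_apply, Finset.smul_sum]
  exact Finset.sum_comm

lemma marginal_tensorPi {R : Type*} [CommSemiring R] (P : κ → Prop) [DecidablePred P]
    {σ : κ → Matrix n n R} (hσ : ∀ l, (σ l).trace = 1) :
    marginal P (tensorPi σ) = tensorPi fun l : {i // P i} => σ l := by
  ext a b
  simp only [marginal_apply, tensorPi, of_apply, ← Fintype.prod_subtype_mul_prod_subtype P,
    Equiv.piEquivPiSubtypeProd_symm_apply_val_left,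
    Equiv.piEquivPiSubtypeProd_symm_apply_val_right, ← Finset.mul_sum]
  rw [← Fintype.prod_sum fun (l : {i // ¬P i}) x => σ l x x]
  simp [show ∀ l, ∑ x, σ l x x = 1 from hσ]

lemma marginal_marginal {P T : κ → Prop} [DecidablePred P] [DecidablePred T]
    (hTP : ∀ i, T i → P i) (ρ : Matrix (κ → n) (κ → n) R) :
    marginal (fun l : {i // P i} => T l) (marginal P ρ)
      = (marginal T ρ).submatrix
          ((Equiv.subtypeSubtypeEquivSubtype (hTP _)).arrowCongr (Equiv.refl n))
          ((Equiv.subtypeSubtypeEquivSubtype (hTP _)).arrowCongr (Equiv.refl n)) := by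
  let φ : ({l : {i // P i} // ¬T l} → n) × ({i // ¬P i} → n) ≃ ({i // ¬T i} → n) :=
    { toFun c i := if h : P i then c.1 ⟨⟨i, h⟩, i.2⟩ else c.2 ⟨i, h⟩
      invFun c := (fun l => c ⟨l.1, l.2⟩, fun i => c ⟨i, fun hT => i.2 (hTP i hT)⟩)
      left_inv c := by
        ext x
        · simp [x.1.2]
        · simp [x.2]
      right_inv c := by funext i; by_cases h : P i <;> simp [h] }
  ext a b
  simp only [marginal_apply, submatrix_apply]
  rw [← Fintype.sum_prod_type']
  refine Fintype.sum_equiv φ _ _ fun c => ?_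
  congr 1 <;> funext i
  all_goals
    by_cases hT : T i
    · simp only [φ, hT, hTP i hT, Equiv.piEquivPiSubtypeProd_symm_apply, Equiv.coe_fn_mk,
        Equiv.arrowCongr_apply, Equiv.coe_refl, Function.comp_apply, id_eq, ↓reduceDIte]
      rfl
    · by_cases hP : P i <;> simp [φ, hP, hT]

end Marginal

section FullySeparable

variable {ι : Type*} [Fintype ι] {d : ℕ} {ρ : Matrix (ι → Fin d) (ι → Fin d) ℂ}

lemma fullySeparableOn_iff :
    FullySeparableOn ι d ρ ↔ ∃ (m : ℕ) (p : Fin m → ℝ) (σ : Fin m → ι → Matrix (Fin d) (Fin d) ℂ),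
      (∀ i, 0 ≤ p i) ∧ (∑ i, p i = 1) ∧ (∀ i k, (σ i k).PosSemidef ∧ (σ i k).trace = 1) ∧
      ρ = ∑ i, p i • tensorPi (σ i) := by
  simp only [FullySeparableOn, ← Matrix.ext_iff, Matrix.sum_apply, Matrix.smul_apply,
    Complex.real_smul, tensorPi, of_apply]

lemma FullySeparableOn.of_sum {U : Type*} [Fintype U] (p : U → ℝ)
    (σ : U → ι → Matrix (Fin d) (Fin d) ℂ) (hp : ∀ u, 0 ≤ p u) (hp1 : ∑ u, p u = 1)
    (hσ : ∀ u k, (σ u k).PosSemidef ∧ (σ u k).trace = 1)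
    (hρ : ρ = ∑ u, p u • tensorPi (σ u)) : FullySeparableOn ι d ρ := by
  let e := (Fintype.equivFin U).symm
  refine fullySeparableOn_iff.mpr ⟨_, p ∘ e, σ ∘ e, fun i => hp _, ?_, fun i => hσ _, ?_⟩
  · rwa [← e.sum_comp] at hp1
  · rw [hρ, ← e.sum_comp]
    rfl

lemma FullySeparableOn.sum_smul {K : Type*} [Fintype K] {w : K → ℝ} (hw : ∀ k, 0 ≤ w k)
    (hw1 : ∑ k, w k = 1) {X : K → Matrix (ι → Fin d) (ι → Fin d) ℂ}
    (hX : ∀ k, FullySeparableOn ι d (X k)) : FullySeparableOn ι d (∑ k, w k • X k) := by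
  choose m p σ hp hp1 hσ hXσ using fun k => fullySeparableOn_iff.mp (hX k)
  refine .of_sum (U := Σ k, Fin (m k)) (fun u => w u.1 * p u.1 u.2) (fun u => σ u.1 u.2)
    (fun u => mul_nonneg (hw _) (hp _ _)) ?_ (fun u => hσ _ _) ?_
  · simp [Fintype.sum_sigma, ← Finset.mul_sum, hp1, hw1]
  · simp [Fintype.sum_sigma, hXσ, Finset.smul_sum, smul_smul]

variable [DecidableEq ι]

lemma fullySeparableOn_marginal (h : FullySeparableOn ι d ρ) (P : ι → Prop) [DecidablePred P] :
    FullySeparableOn {i // P i} d (marginal P ρ) := by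
  obtain ⟨m, p, σ, hp, hp1, hσ, rfl⟩ := fullySeparableOn_iff.mp h
  refine fullySeparableOn_iff.mpr ⟨m, p, fun i l => σ i l, hp, hp1, fun i l => hσ i l, ?_⟩
  simp only [marginal_sum_smul, marginal_tensorPi P fun l => (hσ _ l).2]

lemma FullySeparableOn.purity_le_marginal (h : FullySeparableOn ι d ρ) (T : ι → Prop)
    [DecidablePred T] : purity ρ ≤ purity (marginal T ρ) := by
  obtain ⟨m, p, σ, hp, -, hσ, rfl⟩ := fullySeparableOn_iff.mp h
  simp only [marginal_sum_smul, marginal_tensorPi T fun l => (hσ _ l).2]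
  refine purity_sum_smul_le hp _ _ fun i i' => ?_
  have h0 : ∀ l, 0 ≤ (σ i l * σ i' l).trace := fun l => (hσ i l).1.trace_mul_nonneg_s12 (hσ i' l).1
  have h1 : ∀ l, (σ i l * σ i' l).trace ≤ 1 := fun l =>
    (hσ i l).1.trace_mul_le_one (hσ i' l).1 (hσ i l).2 (hσ i' l).2
  rw [trace_tensorPi_mul_tensorPi, trace_tensorPi_mul_tensorPi,
    ← Fintype.prod_subtype_mul_prod_subtype T]
  exact mul_le_of_le_one_right (Finset.prod_nonneg fun l _ => h0 l)
    (Finset.prod_le_one (fun l _ => h0 l) fun l _ => h1 l)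

end FullySeparable

section Qudits

variable {N d : ℕ}

lemma traceOut_eq_marginal (ρ : Matrix (Fin N → Fin d) (Fin N → Fin d) ℂ) (j : Fin N) :
    traceOut ρ j = marginal (· ≠ j) ρ := by
  let e : Fin d ≃ ({i : Fin N // ¬i ≠ j} → Fin d) :=
    { toFun x _ := x
      invFun c := c ⟨j, not_not.mpr rfl⟩
      left_inv _ := rfl
      right_inv c := funext fun i => congrArg c (Subtype.ext (not_not.mp i.2).symm) }
  ext a b
  refine Fintype.sum_equiv e _ _ fun x => ?_
  congr 1 <;> funext i <;> by_cases h : i = j <;> simp [insertAt, e, h]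

lemma reduced_eq_submatrix_marginal (ρ : Matrix (Fin N → Fin d) (Fin N → Fin d) ℂ) (j : Fin N) :
    reduced ρ j = (marginal (· = j) ρ).submatrix (Equiv.funUnique {i // i = j} (Fin d)).symm
      (Equiv.funUnique {i // i = j} (Fin d)).symm :=
  rfl

lemma SepAcross.purity_le_marginal {S : Finset (Fin N)}
    {ρ : Matrix (Fin N → Fin d) (Fin N → Fin d) ℂ} (h : SepAcross S ρ) :
    purity ρ ≤ purity (marginal (· ∈ S) ρ) := by
  obtain ⟨m, p, A, B, hp, -, hA, hB, hρ⟩ := h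
  let e := Equiv.piEquivPiSubtypeProd (· ∈ S) fun _ : Fin N => Fin d
  have hρe : reindex e e ρ = ∑ i, p i • A i ⊗ₖ B i := by
    ext ⟨a, c⟩ ⟨b, c'⟩
    simp only [e, reindex_apply, submatrix_apply, hρ,
      Equiv.piEquivPiSubtypeProd_symm_apply_val_left,
      Equiv.piEquivPiSubtypeProd_symm_apply_val_right]
    simp [Matrix.sum_apply, Complex.real_smul, mul_assoc]
  have hmarg : marginal (· ∈ S) ρ = ∑ i, p i • A i := by
    rw [marginal, hρe, partialTraceRight_sum_smul_kronecker _ _ _ fun i => (hB i).2]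
  rw [hmarg, ← purity_submatrix_equiv e.symm ρ, ← reindex_apply, hρe]
  exact purity_sum_smul_kronecker_le hp (fun i => (hA i).1) (fun i => (hB i).1) fun i => (hB i).2

end Qudits

theorem mixture_genuinely_entangled_general
    (N d M : ℕ)
    (Φ : Fin M → (Fin N → Fin d) → ℂ)
    (hsep : ∀ k, ∀ j : Fin N,
      FullySeparableOn {i : Fin N // i ≠ j} d (traceOut (pureMat (Φ k)) j))
    (lam : Fin M → ℝ) (h0 : ∀ k, 0 < lam k) (h1 : ∑ k, lam k = 1)
    (ρ : Matrix (Fin N → Fin d) (Fin N → Fin d) ℂ)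
    (hρ : ρ = ∑ k, lam k • pureMat (Φ k))
    (hcrit : ∀ j : Fin N, (reduced ρ j * reduced ρ j).trace < (ρ * ρ).trace) :
    ∀ S : Finset (Fin N), S.Nonempty → S ≠ Finset.univ → ¬ SepAcross S ρ := by
  intro S ⟨j, hj⟩ hS hSep
  obtain ⟨j₀, hj₀⟩ : ∃ j₀, j₀ ∉ S := by simpa [Finset.eq_univ_iff_forall] using hS
  have hτ : FullySeparableOn {i // i ≠ j₀} d (traceOut ρ j₀) := by
    simp only [traceOut_eq_marginal, hρ, marginal_sum_smul] at hsep ⊢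
    exact .sum_smul (fun k => (h0 k).le) h1 fun k => hsep k j₀
  have hSj₀ : ∀ i, i ∈ S → i ≠ j₀ := fun i hi h => hj₀ (h ▸ hi)
  have hjS : ∀ l : {i // i ≠ j₀}, l.1 = j → l.1 ∈ S := fun l h => h ▸ hj
  have hjj₀ : ∀ i, i = j → i ≠ j₀ := fun i h => hSj₀ i (h ▸ hj)
  have := calc
    purity ρ ≤ purity (marginal (· ∈ S) ρ) := hSep.purity_le_marginal
    _ = purity (marginal (·.1 ∈ S) (traceOut ρ j₀)) := by
      rw [traceOut_eq_marginal, marginal_marginal hSj₀, purity_submatrix_equiv]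
    _ ≤ purity (marginal (·.1.1 = j) (marginal (·.1 ∈ S) (traceOut ρ j₀))) :=
      (fullySeparableOn_marginal hτ _).purity_le_marginal _
    _ = purity (reduced ρ j) := by
      rw [marginal_marginal hjS, purity_submatrix_equiv, traceOut_eq_marginal,
        marginal_marginal hjj₀, purity_submatrix_equiv, reduced_eq_submatrix_marginal,
        purity_submatrix_equiv]
  exact (hcrit j).not_ge this

/-- Theorem 3 of the paper: a mixture, with strictly positive weights, of `N`-partite pure
states each of whose single-site partial traces is fully separable, is genuinely multipartite
entangled as soon as every one-qudit reduced purity is strictly smaller than the total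
purity. -/
theorem mixture_genuinely_entangled
    (N d M : ℕ) (hN : 3 ≤ N)
    (Φ : Fin M → (Fin N → Fin d) → ℂ)
    (hunit : ∀ k, ∑ a, ‖Φ k a‖ ^ 2 = 1)
    (hsep : ∀ k, ∀ j : Fin N,
      FullySeparableOn {i : Fin N // i ≠ j} d (traceOut (pureMat (Φ k)) j))
    (lam : Fin M → ℝ) (h0 : ∀ k, 0 < lam k) (h1 : ∑ k, lam k = 1)
    (ρ : Matrix (Fin N → Fin d) (Fin N → Fin d) ℂ)
    (hρ : ρ = ∑ k, lam k • pureMat (Φ k))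
    (hcrit : ∀ j : Fin N, (reduced ρ j * reduced ρ j).trace < (ρ * ρ).trace) :
    ∀ S : Finset (Fin N), S.Nonempty → S ≠ Finset.univ → ¬ SepAcross S ρ :=
  mixture_genuinely_entangled_general N d M Φ hsep lam h0 h1 ρ hρ hcrit
end
end

section
/- Let N ≥ 2 and 1 ≤ m ≤ N−1, and let the N-qubit Dicke state D_m^N : (Fin N → Fin 2) → ℂ be defined by D_m^N(f) = (binomial N m)^{-1/2} if exactly m of the values f(k) equal 1, and 0 otherwise. Then for every subsystem j : Fin N, the one-qubit reduced density matrix of |D_m^N⟩⟨D_m^N| at site j equals (binomial (N−1) m · |0⟩⟨0| + binomial (N−1) (m−1) · |1⟩⟨1|) / binomial N m. Moreover, this reduced matrix equals (1/2)·I_2 if and only if N = 2m. -/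
noncomputable section

/-- The `N`-qubit Dicke state with `m` excitations: amplitude `(binom N m)^(-1/2)` on the
basis states with exactly `m` ones, and `0` elsewhere. -/
def dicke (N m : ℕ) : (Fin N → Fin 2) → ℂ :=
  fun f => if (Finset.univ.filter fun k => f k = 1).card = m
    then (Real.sqrt (N.choose m) : ℂ)⁻¹ else 0

/-!
Write a basis vector as `insertAt j x g`: its value `x` at site `j` and the assignment `g` of the
other `N - 1` qubits. Its number of ones is `#ones(g) + x`, so the `(x, y)` entry of the reduced
matrix counts the `g` with `#ones(g) + x = #ones(g) + y = m`, each weighted by `1 / C(N, m)`.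
Off the diagonal there are none; on it there are `C(N - 1, m - x)`. By Pascal's rule the two
diagonal entries add up to one, so the state is maximally mixed iff `C(N - 1, m) = C(N - 1, m - 1)`,
and `C(n, k + 1) (k + 1) = C(n, k) (n - k)` shows that this happens iff `N = 2m`.
-/

open Finset Matrix

theorem insertAt_self {N d : ℕ} (j : Fin N) (x : Fin d) (g : {i : Fin N // i ≠ j} → Fin d) :
    insertAt j x g j = x := dif_pos rfl

theorem insertAt_coe {N d : ℕ} (j : Fin N) (x : Fin d) (g : {i : Fin N // i ≠ j} → Fin d)
    (i : {i : Fin N // i ≠ j}) : insertAt j x g i = g i := dif_neg i.2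

theorem card_filter_insertAt_eq {N d : ℕ} (j : Fin N) (x v : Fin d)
    (g : {i : Fin N // i ≠ j} → Fin d) :
    #{k | insertAt j x g k = v} = #{i | g i = v} + if x = v then 1 else 0 := by
  simp only [card_filter, Fintype.sum_eq_add_sum_subtype_ne _ j, insertAt_self, insertAt_coe]
  exact add_comm _ _

theorem card_filter_card_filter_eq_one_eq_choose {α : Type*} [Fintype α] [DecidableEq α] (k : ℕ) :
    #{g : α → Fin 2 | #{i | g i = 1} = k} = (Fintype.card α).choose k := by
  rw [← card_univ, ← card_powersetCard k univ]
  refine card_nbij' (fun g => ({i | g i = 1} : Finset α)) (fun s i => if i ∈ s then 1 else 0)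
    ?_ ?_ ?_ ?_
  · intro g hg
    simpa [mem_powersetCard_univ] using hg
  · intro s hs
    simpa using hs
  · intro g _
    ext i
    rcases Fin.exists_fin_two.mp ⟨g i, rfl⟩ with h | h <;> simp [h]
  · intro s _
    ext i
    by_cases h : i ∈ s <;> simp [h]

theorem pureMat_dicke_apply (N m : ℕ) (f f' : Fin N → Fin 2) :
    pureMat (dicke N m) f f' =
      if #{k | f k = 1} = m ∧ #{k | f' k = 1} = m then ((N.choose m : ℂ))⁻¹ else 0 := by
  have hsq : ((√(N.choose m : ℝ) : ℂ))⁻¹ * starRingEnd ℂ ((√(N.choose m : ℝ) : ℂ))⁻¹ =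
      ((N.choose m : ℂ))⁻¹ := by
    rw [map_inv₀, Complex.conj_ofReal, ← mul_inv, ← Complex.ofReal_mul,
      Real.mul_self_sqrt (Nat.cast_nonneg _), Complex.ofReal_natCast]
  simp only [pureMat, dicke, of_apply]
  split_ifs <;> simp_all

theorem reduced_pureMat_dicke_apply (N m : ℕ) (j : Fin N) (x y : Fin 2) :
    reduced (pureMat (dicke N m)) j x y =
      #{g : {i // i ≠ j} → Fin 2 | #{i | g i = 1} + (if x = 1 then 1 else 0) = m ∧
          #{i | g i = 1} + (if y = 1 then 1 else 0) = m} • ((N.choose m : ℂ))⁻¹ := by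
  simp only [reduced, of_apply, pureMat_dicke_apply, card_filter_insertAt_eq]
  rw [← sum_filter, sum_const]

theorem reduced_pureMat_dicke (n k : ℕ) (j : Fin (n + 1)) :
    reduced (pureMat (dicke (n + 1) (k + 1))) j =
      ((n + 1).choose (k + 1) : ℂ)⁻¹ • diagonal ![(n.choose (k + 1) : ℂ), n.choose k] := by
  ext x y
  rw [reduced_pureMat_dicke_apply, Matrix.smul_apply]
  fin_cases x <;> fin_cases y <;> simp [card_filter_card_filter_eq_one_eq_choose, mul_comm]
  all_goals exact .inr fun g h₁ h₂ => by omega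

theorem Nat.choose_succ_eq_choose_iff {n k : ℕ} (hk : k ≤ n) :
    n.choose (k + 1) = n.choose k ↔ n = 2 * k + 1 := by
  refine ⟨fun h => ?_, by rintro rfl; exact Nat.choose_symm_half k⟩
  have hrec := Nat.choose_succ_right_eq n k
  rw [h] at hrec
  have := Nat.eq_of_mul_eq_mul_left (Nat.choose_pos hk) hrec
  omega

theorem Matrix.diagonal_vec2_eq_add_single {α : Type*} [Semiring α] (a b : α) :
    diagonal ![a, b] = a • single 0 0 1 + b • single 1 1 1 := by
  ext i k
  fin_cases i <;> fin_cases k <;> simp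

theorem Matrix.inv_add_smul_diagonal_vec2_eq_iff {K : Type*} [Field K] [CharZero K] {a b : K}
    (hab : a + b ≠ 0) :
    (a + b)⁻¹ • diagonal ![a, b] = (2 : K)⁻¹ • (1 : Matrix (Fin 2) (Fin 2) K) ↔ a = b := by
  rw [smul_one_eq_diagonal, ← diagonal_smul, diagonal_eq_diagonal_iff, Fin.forall_fin_two]
  simp only [Pi.smul_apply, cons_val_zero, cons_val_one, smul_eq_mul]
  rw [inv_mul_eq_iff_eq_mul₀ hab, inv_mul_eq_iff_eq_mul₀ hab]
  constructor
  · rintro ⟨h, -⟩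
    linear_combination 2 * h
  · rintro rfl
    constructor <;> ring

theorem dicke_reduced_general (N m : ℕ) (hm : 1 ≤ m) (hmN : m ≤ N - 1) :
    ∀ j : Fin N,
      reduced (pureMat (dicke N m)) j
        = ((N.choose m : ℂ))⁻¹ •
            (((N - 1).choose m : ℂ) • Matrix.single (0 : Fin 2) (0 : Fin 2) (1 : ℂ)
              + ((N - 1).choose (m - 1) : ℂ)
                  • Matrix.single (1 : Fin 2) (1 : Fin 2) (1 : ℂ)) ∧
      (reduced (pureMat (dicke N m)) j = (2 : ℂ)⁻¹ • 1 ↔ N = 2 * m) := by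
  obtain ⟨k, rfl⟩ : ∃ k, m = k + 1 := ⟨m - 1, by omega⟩
  obtain ⟨n, rfl⟩ : ∃ n, N = n + 1 := ⟨N - 1, by omega⟩
  simp only [Nat.add_sub_cancel] at hmN ⊢
  intro j
  rw [reduced_pureMat_dicke, ← diagonal_vec2_eq_add_single]
  refine ⟨rfl, ?_⟩
  have hsum : (n.choose (k + 1) + n.choose k : ℂ) ≠ 0 := by
    exact_mod_cast (Nat.add_pos_right _ (Nat.choose_pos (by omega))).ne'
  rw [Nat.choose_succ_succ', Nat.cast_add, add_comm, inv_add_smul_diagonal_vec2_eq_iff hsum,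
    Nat.cast_inj, Nat.choose_succ_eq_choose_iff (by omega)]
  omega

/-- Every one-qubit reduced density matrix of the Dicke state `|D_m^N⟩⟨D_m^N|` equals
`(binom (N-1) m • |0⟩⟨0| + binom (N-1) (m-1) • |1⟩⟨1|) / binom N m`; it is maximally mixed
if and only if `N = 2m`. -/
theorem dicke_reduced (N m : ℕ) (hN : 2 ≤ N) (hm : 1 ≤ m) (hmN : m ≤ N - 1) :
    ∀ j : Fin N,
      reduced (pureMat (dicke N m)) j
        = ((N.choose m : ℂ))⁻¹ •
            (((N - 1).choose m : ℂ) • Matrix.single (0 : Fin 2) (0 : Fin 2) (1 : ℂ)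
              + ((N - 1).choose (m - 1) : ℂ)
                  • Matrix.single (1 : Fin 2) (1 : Fin 2) (1 : ℂ)) ∧
      (reduced (pureMat (dicke N m)) j = (2 : ℂ)⁻¹ • 1 ↔ N = 2 * m) :=
  dicke_reduced_general N m hm hmN
end
end

section
/- Let N ≥ 2, d ≥ 2 and j : Fin N. Define the N-qudit state Φ : (Fin N → Fin d) → ℂ by Φ(a) = 1/√d if there exists k : Fin d with a(i) = k for all i ≠ j and a(j) = k+1 (addition mod d), and Φ(a) = 0 otherwise. Then Φ is a unit vector and for every subsystem i : Fin N the one-qudit reduced density matrix of |Φ⟩⟨Φ| at site i equals (1/d)·I_d. -/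
/-! `phiShift N d j` is the uniform superposition, with amplitude `1/√d`, of the `d` configurations
`shiftConfig j k`, and for every site `m` the map `k ↦ shiftConfig j k m` is a bijection of `Fin d`.
Hence the diagonal of the reduced matrix at `i`, which is the distribution of the value at `i`,
is uniform. An off-diagonal entry pairs two configurations that agree away from `i`; since
`N ≥ 2` there is another site, where distinct configurations of the support differ, so it
vanishes. -/

noncomputable section

/-- The state `|Φ_d^j⟩ = (1/√d) ∑ₖ |k⟩^{⊗(j-1)} |k+1⟩ |k⟩^{⊗(N-j)}`, with `k + 1` taken
modulo `d`: amplitude `1/√d` on assignments equal to some `k` away from site `j` and to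
`k + 1` at site `j`, and `0` elsewhere. -/
def phiShift (N d : ℕ) [NeZero d] (j : Fin N) : (Fin N → Fin d) → ℂ :=
  fun a => if ∃ k : Fin d, (∀ i, i ≠ j → a i = k) ∧ a j = k + 1
    then (Real.sqrt d : ℂ)⁻¹ else 0

open Finset Function

section insertAt

variable {N d : ℕ} (j : Fin N)

@[simp]
lemma insertAt_apply_self (x : Fin d) (g : {i : Fin N // i ≠ j} → Fin d) :
    insertAt j x g j = x := by
  simp [insertAt]

@[simp]
lemma insertAt_apply_of_ne (x : Fin d) (g : {i : Fin N // i ≠ j} → Fin d) {i : Fin N}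
    (hi : i ≠ j) : insertAt j x g i = g ⟨i, hi⟩ := by
  simp [insertAt, hi]

lemma sum_comp_insertAt {M : Type*} [AddCommMonoid M] (F : (Fin N → Fin d) → M) (x : Fin d) :
    ∑ g, F (insertAt j x g) = ∑ a with a j = x, F a := by
  refine Finset.sum_nbij' (insertAt j x) (fun a i => a i) (by simp) (by simp) ?_ ?_ (by simp)
  · intro g _
    ext i
    simp [i.2]
  · intro a ha
    funext i
    by_cases hi : i = j
    · subst hi
      simpa [eq_comm] using ha
    · simp [hi]

end insertAt

section reduced

variable {N d : ℕ} (Φ : (Fin N → Fin d) → ℂ) (i : Fin N)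

lemma reduced_pureMat_apply_self (x : Fin d) :
    reduced (pureMat Φ) i x x = ∑ a with a i = x, ((‖Φ a‖ ^ 2 : ℝ) : ℂ) := by
  simp only [reduced, pureMat, Matrix.of_apply, Complex.mul_conj, Complex.normSq_eq_norm_sq]
  exact sum_comp_insertAt i (fun a => ((‖Φ a‖ ^ 2 : ℝ) : ℂ)) x

lemma reduced_pureMat_apply_of_ne
    (hΦ : ∀ a b, Φ a ≠ 0 → Φ b ≠ 0 → Set.EqOn a b {i}ᶜ → a = b)
    {x y : Fin d} (hxy : x ≠ y) : reduced (pureMat Φ) i x y = 0 := by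
  refine Finset.sum_eq_zero fun g _ => ?_
  by_contra h
  obtain ⟨hx, hy⟩ := mul_ne_zero_iff.mp h
  have := hΦ _ _ hx (by simpa using hy) fun m hm => by simp [Set.mem_compl_singleton_iff.mp hm]
  exact hxy (by simpa using congrFun this i)

end reduced

section phiShift

variable {N d : ℕ} [NeZero d] (j : Fin N)

def shiftConfig (k : Fin d) : Fin N → Fin d :=
  update (fun _ => k) j (k + 1)

lemma shiftConfig_apply_injective (m : Fin N) : Injective fun k : Fin d => shiftConfig j k m := by
  intro k k' h
  by_cases hm : m = j
  · subst hm
    simpa [shiftConfig] using h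
  · simpa [shiftConfig, hm] using h

lemma shiftConfig_injective : Injective (shiftConfig (d := d) j) :=
  fun _ _ h => shiftConfig_apply_injective j j (congrFun h j)

lemma phiShift_eq_ite (a : Fin N → Fin d) :
    phiShift N d j a = if a ∈ Set.range (shiftConfig j) then (Real.sqrt d : ℂ)⁻¹ else 0 := by
  refine if_congr ⟨fun ⟨k, hk, hj⟩ => ⟨k, ?_⟩, ?_⟩ rfl rfl
  · funext i
    by_cases hi : i = j
    · subst hi
      simp [shiftConfig, hj]
    · simp [shiftConfig, hi, hk i hi]
  · rintro ⟨k, rfl⟩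
    exact ⟨k, fun i hi => by simp [shiftConfig, hi], by simp [shiftConfig]⟩

lemma phiShift_ne_zero_iff (a : Fin N → Fin d) :
    phiShift N d j a ≠ 0 ↔ a ∈ Set.range (shiftConfig j) := by
  rw [phiShift_eq_ite]
  split_ifs with h <;> simp [h, NeZero.ne]

lemma norm_phiShift_sq (a : Fin N → Fin d) :
    ‖phiShift N d j a‖ ^ 2 = if a ∈ Set.range (shiftConfig j) then (d : ℝ)⁻¹ else 0 := by
  rw [phiShift_eq_ite]
  split_ifs <;> simp

lemma sum_norm_phiShift_sq (P : (Fin N → Fin d) → Prop) [DecidablePred P] :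
    ∑ a with P a, ‖phiShift N d j a‖ ^ 2 = #{k | P (shiftConfig j k)} / d := by
  calc ∑ a with P a, ‖phiShift N d j a‖ ^ 2
      = ∑ a ∈ image (shiftConfig j) {k | P (shiftConfig j k)}, ‖phiShift N d j a‖ ^ 2 := by
        refine (sum_subset (by simp +contextual [subset_iff]) fun a ha ha' => ?_).symm
        rw [norm_phiShift_sq, if_neg]
        rintro ⟨k, rfl⟩
        exact ha' (mem_image_of_mem _ (by simpa using ha))
    _ = ∑ k with P (shiftConfig j k), (d : ℝ)⁻¹ := by
        rw [sum_image fun k _ k' _ h => shiftConfig_injective j h]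
        simp [norm_phiShift_sq]
    _ = #{k | P (shiftConfig j k)} / d := by
        rw [sum_const, nsmul_eq_mul, div_eq_mul_inv]

lemma card_filter_shiftConfig_apply_eq (i : Fin N) (x : Fin d) :
    #{k | shiftConfig j k i = x} = 1 := by
  obtain ⟨k, hk⟩ := Finite.surjective_of_injective (shiftConfig_apply_injective j i) x
  exact card_eq_one.mpr ⟨k, by ext k'; simp [← hk, (shiftConfig_apply_injective j i).eq_iff]⟩

lemma eq_of_phiShift_ne_zero_of_eqOn_compl (hN : 2 ≤ N) (i : Fin N) (a b : Fin N → Fin d)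
    (ha : phiShift N d j a ≠ 0) (hb : phiShift N d j b ≠ 0) (hab : Set.EqOn a b {i}ᶜ) :
    a = b := by
  obtain ⟨k, rfl⟩ := (phiShift_ne_zero_iff j a).mp ha
  obtain ⟨k', rfl⟩ := (phiShift_ne_zero_iff j b).mp hb
  have : Nontrivial (Fin N) := Fin.nontrivial_iff_two_le.mpr hN
  obtain ⟨m, hm⟩ := exists_ne i
  rw [shiftConfig_apply_injective j m (hab hm)]

end phiShift

theorem phiShift_reduced_maximallyMixed_general
    (N d : ℕ) [NeZero d] (hN : 2 ≤ N) (j : Fin N) :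
    (∑ a, ‖phiShift N d j a‖ ^ 2 = 1) ∧
    (∀ i : Fin N, reduced (pureMat (phiShift N d j)) i = (d : ℂ)⁻¹ • 1) := by
  constructor
  · simpa [NeZero.ne] using sum_norm_phiShift_sq (N := N) (d := d) j fun _ => True
  · intro i
    ext x y
    rcases eq_or_ne x y with rfl | hxy
    · rw [reduced_pureMat_apply_self, ← Complex.ofReal_sum, sum_norm_phiShift_sq,
        card_filter_shiftConfig_apply_eq]
      simp
    · rw [reduced_pureMat_apply_of_ne _ i (eq_of_phiShift_ne_zero_of_eqOn_compl j hN i) hxy]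
      simp [hxy]

/-- `|Φ_d^j⟩` is a unit vector and all of its one-qudit reduced density matrices are
maximally mixed. -/
theorem phiShift_reduced_maximallyMixed
    (N d : ℕ) [NeZero d] (hN : 2 ≤ N) (hd : 2 ≤ d) (j : Fin N) :
    (∑ a, ‖phiShift N d j a‖ ^ 2 = 1) ∧
    (∀ i : Fin N, reduced (pureMat (phiShift N d j)) i = (d : ℂ)⁻¹ • 1) :=
  phiShift_reduced_maximallyMixed_general N d hN j
end
end
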